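/- arXiv:2107.08428 — 2 statements merged into one kernel-verified Lean document; each statement's English description precedes it below -/
import Mathlib

section
/- Let V be a locally finite game graph and k ≥ 1. (a) If V, R(V), …, R^{(k)}(V) are all draw-free, then R^{(k+1)}(V) = R(R^{(k)}(V)), where R is applied to R^{(k)}(V) regarded as a game graph in its own right. (b) V is k-stable if and only if V, R(V), …, R^{(k)}(V) are all draw-free. -/
open scoped Classical

universe u

/-- `PosP Γ n` is the set `Pₙ` of positions from which the second player can win
within `n` rounds: `P₀` is the set of terminal positions, and
`Pₙ₊₁ = {x : every option of x has an option in Pₙ}`. -/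
def PosP {V : Type*} (Γ : V → Finset V) : ℕ → Set V
  | 0 => {x | Γ x = ∅}
  | n + 1 => {x | ∀ y ∈ Γ x, ∃ z ∈ Γ y, z ∈ PosP Γ n}

/-- `PosN Γ n` is the set `Nₙ`: for `n ≥ 1`, `Nₙ = {x : some option of x lies in Pₙ₋₁}`. -/
def PosN {V : Type*} (Γ : V → Finset V) : ℕ → Set V
  | 0 => ∅
  | n + 1 => {x | ∃ y ∈ Γ x, y ∈ PosP Γ n}

/-- The P-positions `𝒫 = ⋃ₙ Pₙ` (second player wins). -/
def PPos {V : Type*} (Γ : V → Finset V) : Set V := ⋃ n, PosP Γ n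

/-- The N-positions `𝒩 = ⋃ₙ Nₙ` (first player wins). -/
def NPos {V : Type*} (Γ : V → Finset V) : Set V := ⋃ n, PosN Γ n

/-- The D-positions `𝒟 = V ∖ (𝒫 ∪ 𝒩)` (draws). -/
def DPos {V : Type*} (Γ : V → Finset V) : Set V := (PPos Γ ∪ NPos Γ)ᶜ

/-- The mex (least natural number not attained) of the values `g y`, `y ∈ s`. -/
noncomputable def mexF {V : Type*} (s : Finset V) (g : V → ℕ∞) : ℕ :=
  sInf {n : ℕ | ∀ y ∈ s, g y ≠ (n : ℕ∞)}

/-- The approximants `𝒢ₙ` of the extended Sprague-Grundy function. -/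
noncomputable def Gfun {V : Type*} (Γ : V → Finset V) : ℕ → V → ℕ∞
  | 0 => fun x => if Γ x = ∅ then 0 else ⊤
  | n + 1 => fun x =>
      let m := mexF (Γ x) (Gfun Γ n)
      if ∀ y ∈ Γ x, Gfun Γ n y ≤ (m : ℕ∞) ∨ ∃ z ∈ Γ y, Gfun Γ n z = (m : ℕ∞)
      then (m : ℕ∞) else ⊤

/-- `x` has finite rank with (finite) Sprague-Grundy value `m`:
`𝒢ₙ(x) = m` for all sufficiently large `n`. -/
def HasGVal {V : Type*} (Γ : V → Finset V) (x : V) (m : ℕ) : Prop :=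
  ∃ n₀ : ℕ, ∀ n ≥ n₀, Gfun Γ n x = (m : ℕ∞)

/-- `x` has infinite rank: `𝒢ₙ(x) = ∞` for all `n`. -/
def InfiniteRank {V : Type*} (Γ : V → Finset V) (x : V) : Prop :=
  ∀ n : ℕ, Gfun Γ n x = ⊤

/-- The rank of `x`: the least `n` with `𝒢ₙ(x) < ∞`, or `∞` if there is none. -/
noncomputable def rank {V : Type*} (Γ : V → Finset V) (x : V) : ℕ∞ :=
  sInf ((↑) '' {n : ℕ | Gfun Γ n x ≠ ⊤})

/-- For `x` of infinite rank, the set `𝒜` with `𝒢(x) = ∞(𝒜)`: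
the set of finite Sprague-Grundy values of finite-rank options of `x`. -/
def ValSet {V : Type*} (Γ : V → Finset V) (x : V) : Set ℕ :=
  {a | ∃ y ∈ Γ x, HasGVal Γ y a}

/-- The graph of the disjunctive sum: move in exactly one coordinate. -/
noncomputable def sumGraph {V W : Type*} (Γ : V → Finset V) (Δ : W → Finset W) :
    V × W → Finset (V × W) := fun p =>
  (Γ p.1).image (fun u => (u, p.2)) ∪ (Δ p.2).image (fun w => (p.1, w))

/-- Two (positions of possibly different) games lie in the same outcome class. -/
def SameOutcome {V W : Type*} (Γ : V → Finset V) (x : V) (Δ : W → Finset W) (y : W) : Prop :=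
  (x ∈ PPos Γ ↔ y ∈ PPos Δ) ∧ (x ∈ NPos Γ ↔ y ∈ NPos Δ) ∧ (x ∈ DPos Γ ↔ y ∈ DPos Δ)

/-- Equivalence of games: `G + X` and `H + X` have the same outcome for every
locally finite game `X`. -/
def GameEquiv {V W : Type*} (Γ : V → Finset V) (x : V) (Δ : W → Finset W) (y : W) : Prop :=
  ∀ (X : Type u) (Ξ : X → Finset X) (z : X),
    SameOutcome (sumGraph Γ Ξ) (x, z) (sumGraph Δ Ξ) (y, z)

/-- The nim heap `*m`: positions `0, …, m`, where from `k` one can move to any `j < k`. -/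
def nimGraph (m : ℕ) : Fin (m + 1) → Finset (Fin (m + 1)) :=
  fun k => Finset.univ.filter (fun j => j < k)

/-- The reduced graph `R(V)`: the induced graph on the complement of the P-positions. -/
noncomputable def reducedGraph {V : Type*} (Γ : V → Finset V) :
    {x : V // x ∉ PPos Γ} → Finset {x : V // x ∉ PPos Γ} := fun x =>
  (Γ x.1).subtype (fun y => y ∉ PPos Γ)

/-- The vertex set of `R^{(k)}(V)`: positions which do not have finite rank with
Sprague-Grundy value `< k`. -/
def RkSet {V : Type*} (Γ : V → Finset V) (k : ℕ) : Set V :=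
  {x | ¬ ∃ m < k, HasGVal Γ x m}

/-- The induced game graph `R^{(k)}(V)` on `RkSet Γ k`. -/
noncomputable def RkGraph {V : Type*} (Γ : V → Finset V) (k : ℕ) :
    RkSet Γ k → Finset (RkSet Γ k) := fun x =>
  (Γ x.1).subtype (fun y => y ∈ RkSet Γ k)

/-- `V` is `k`-stable: every infinite-rank position `x`, with `𝒢(x) = ∞(𝒜)`,
has `{0, 1, …, k} ⊆ 𝒜`. -/
def kStable {V : Type*} (Γ : V → Finset V) (k : ℕ) : Prop :=
  ∀ x, InfiniteRank Γ x → ∀ j ≤ k, j ∈ ValSet Γ x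

/-- `l` is a directed walk from `o` to `x` in the graph `Γ`. -/
def IsWalk {V : Type*} (Γ : V → Finset V) (o x : V) (l : List V) : Prop :=
  l.head? = some o ∧ l.getLast? = some x ∧ l.Chain' (fun a b => b ∈ Γ a)

/-- `Γ` is a tree with root `o`: `o` has no incoming arcs, and every vertex is
reached from `o` by a unique directed walk. -/
def IsTree {V : Type*} (Γ : V → Finset V) (o : V) : Prop :=
  (∀ x, o ∉ Γ x) ∧ ∀ x, ∃! l : List V, IsWalk Γ o x l

/-- `f` is a mex labelling: `f x` is the least natural number not attained by `f`
on the options of `x`, for every `x`. -/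
def MexLabelling {V : Type*} (Γ : V → Finset V) (f : V → ℕ) : Prop :=
  ∀ x, f x = sInf {n : ℕ | ∀ y ∈ Γ x, f y ≠ n}

/-! Finite Grundy values are stable: once `𝒢ₙ(x) = m < ∞`, also `𝒢ₙ₊₁(x) = m`.
The heart of the argument is that, as long as `R^{(i)}(V)` is draw-free for every `i < j`,
the P-positions of `R^{(j)}(V)` are exactly the positions of finite rank with `𝒢 = j`.
A position of value `j` is a P-position of `R^{(j)}`, since every move in `R^{(j)}` can be
reversed to a position of value `j`. Conversely, by induction on `j` and on the P-level, a
P-position `x` of `R^{(j)}` has options of every value `a < j` (it is an N-position of the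
draw-free `R^{(a)}`), has no option of value `j`, and every option of value `> j` or of infinite
rank reverses to value `j`; this is exactly what makes `𝒢ₙ(x) = j` for large `n`.
Then (a) holds because `R^{(k+1)}` removes from `R^{(k)}` exactly the positions of value `k`,
and (b) because a position of infinite rank is never a P-position of `R^{(j)}`, and is an
N-position of it exactly when it has an option of value `j`. -/

section Mex

variable {V : Type*}

lemma mexF_set_nonempty (s : Finset V) (g : V → ℕ∞) :
    {n : ℕ | ∀ y ∈ s, g y ≠ (n : ℕ∞)}.Nonempty := by
  refine ⟨(s.sup fun y => (g y).toNat) + 1, fun y hy hgy => ?_⟩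
  have := Finset.le_sup (f := fun y => (g y).toNat) hy
  rw [hgy, ENat.toNat_natCast] at this
  omega

lemma mexF_le {s : Finset V} {g : V → ℕ∞} {a : ℕ} (h : ∀ y ∈ s, g y ≠ a) : mexF s g ≤ a :=
  Nat.sInf_le h

lemma mexF_eq_iff {s : Finset V} {g : V → ℕ∞} {m : ℕ} :
    mexF s g = m ↔ (∀ y ∈ s, g y ≠ m) ∧ ∀ a < m, ∃ y ∈ s, g y = a := by
  have hmem : ∀ y ∈ s, g y ≠ mexF s g := Nat.sInf_mem (mexF_set_nonempty s g)
  constructor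
  · rintro rfl
    refine ⟨hmem, fun a ha => ?_⟩
    by_contra! h
    exact (mexF_le h).not_gt ha
  · rintro ⟨hm, hlt⟩
    refine le_antisymm (mexF_le hm) (not_lt.mp fun h => ?_)
    obtain ⟨y, hy, hgy⟩ := hlt _ h
    exact hmem y hy hgy

end Mex

section Grundy

variable {V : Type*} {Γ : V → Finset V}

lemma gfun_zero_eq_coe_iff {x : V} {m : ℕ} : Gfun Γ 0 x = m ↔ Γ x = ∅ ∧ m = 0 := by
  show (if Γ x = ∅ then 0 else ⊤) = (m : ℕ∞) ↔ _
  split_ifs with h <;> simp [h, eq_comm]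

lemma gfun_succ_eq_coe_iff {n : ℕ} {x : V} {m : ℕ} :
    Gfun Γ (n + 1) x = m ↔ mexF (Γ x) (Gfun Γ n) = m ∧
      ∀ y ∈ Γ x, Gfun Γ n y ≤ m ∨ ∃ z ∈ Γ y, Gfun Γ n z = m := by
  show (if _ then _ else ⊤) = (m : ℕ∞) ↔ _
  split_ifs with h
  · simp only [Nat.cast_inj]
    exact ⟨fun hm => ⟨hm, hm ▸ h⟩, And.left⟩
  · refine ⟨fun htop => absurd htop.symm (ENat.natCast_ne_top m), fun ⟨hm, hrev⟩ => ?_⟩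
    exact absurd (hm ▸ hrev) h

lemma gfun_succ_eq_of_ne_top {n : ℕ} {x : V} (hx : Gfun Γ n x ≠ ⊤) :
    Gfun Γ (n + 1) x = Gfun Γ n x := by
  obtain ⟨m, hm⟩ := ENat.ne_top_iff_exists.mp hx
  rw [← hm]
  induction n generalizing x m with
  | zero =>
    obtain ⟨hΓ, rfl⟩ := gfun_zero_eq_coe_iff.mp hm.symm
    exact (gfun_succ_eq_coe_iff (m := 0)).mpr ⟨mexF_eq_iff.mpr (by simp [hΓ]), by simp [hΓ]⟩
  | succ n ih =>
    have ih' : ∀ y, Gfun Γ n y ≠ ⊤ → Gfun Γ (n + 1) y = Gfun Γ n y := fun y hy => by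
      obtain ⟨v, hv⟩ := ENat.ne_top_iff_exists.mp hy
      rw [← hv, ih hy v hv]
    obtain ⟨hmex, hrev⟩ := gfun_succ_eq_coe_iff.mp hm.symm
    obtain ⟨hne, hlt⟩ := mexF_eq_iff.mp hmex
    refine gfun_succ_eq_coe_iff.mpr ⟨mexF_eq_iff.mpr ⟨fun y hy hym => ?_, fun a ha => ?_⟩,
      fun y hy => ?_⟩
    · by_cases hytop : Gfun Γ n y = ⊤
      · -- `y` reverses to some `z` of value `m`, which keeps `m` out of the mex at `y`
        obtain hle | ⟨z, hz, hzm⟩ := hrev y hy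
        · simp [hytop] at hle
        · exact (mexF_eq_iff.mp (gfun_succ_eq_coe_iff.mp hym).1).1 z hz hzm
      · exact hne y hy (ih' y hytop ▸ hym)
    · obtain ⟨y, hy, hya⟩ := hlt a ha
      exact ⟨y, hy, ih' y (hya ▸ ENat.natCast_ne_top a) ▸ hya⟩
    · obtain hle | ⟨z, hz, hzm⟩ := hrev y hy
      · exact Or.inl (ih' y (ne_top_of_le_ne_top (ENat.natCast_ne_top m) hle) ▸ hle)
      · exact Or.inr ⟨z, hz, ih' z (hzm ▸ ENat.natCast_ne_top m) ▸ hzm⟩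

lemma gfun_eq_of_le {n N : ℕ} {x : V} {m : ℕ} (h : Gfun Γ n x = m) (hN : n ≤ N) :
    Gfun Γ N x = m := by
  induction N, hN using Nat.le_induction with
  | base => exact h
  | succ N _ ih => rw [gfun_succ_eq_of_ne_top (ih ▸ ENat.natCast_ne_top m), ih]

lemma hasGVal_iff_exists_gfun_eq {x : V} {m : ℕ} : HasGVal Γ x m ↔ ∃ n, Gfun Γ n x = m :=
  ⟨fun ⟨n, h⟩ => ⟨n, h n le_rfl⟩, fun ⟨n, h⟩ => ⟨n, fun _ hN => gfun_eq_of_le h hN⟩⟩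

lemma HasGVal.unique {x : V} {m m' : ℕ} (h : HasGVal Γ x m) (h' : HasGVal Γ x m') : m = m' := by
  obtain ⟨n, hn⟩ := h
  obtain ⟨n', hn'⟩ := h'
  exact_mod_cast (hn _ (le_max_left n n')).symm.trans (hn' _ (le_max_right n n'))

lemma hasGVal_or_infiniteRank (x : V) : (∃ m, HasGVal Γ x m) ∨ InfiniteRank Γ x := by
  by_contra! h
  obtain ⟨n, hn⟩ := not_forall.mp h.2
  obtain ⟨m, hm⟩ := ENat.ne_top_iff_exists.mp hn
  exact h.1 m (hasGVal_iff_exists_gfun_eq.mpr ⟨n, hm.symm⟩)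

lemma InfiniteRank.not_hasGVal {x : V} (h : InfiniteRank Γ x) (m : ℕ) : ¬ HasGVal Γ x m :=
  fun ⟨n, hn⟩ => ENat.natCast_ne_top m ((hn n le_rfl).symm.trans (h n))

lemma HasGVal.exists_mem_hasGVal_of_lt {x : V} {m a : ℕ} (h : HasGVal Γ x m) (ha : a < m) :
    ∃ y ∈ Γ x, HasGVal Γ y a := by
  obtain ⟨n, hn⟩ := h
  obtain ⟨y, hy, hya⟩ :=
    (mexF_eq_iff.mp (gfun_succ_eq_coe_iff.mp (hn (n + 1) n.le_succ)).1).2 a ha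
  exact ⟨y, hy, hasGVal_iff_exists_gfun_eq.mpr ⟨n, hya⟩⟩

lemma hasGVal_of_options_mex_reverse {x : V} {m : ℕ}
    (hne : ∀ y ∈ Γ x, ¬ HasGVal Γ y m)
    (hlt : ∀ a < m, ∃ y ∈ Γ x, HasGVal Γ y a)
    (hrev : ∀ y ∈ Γ x, (∃ v ≤ m, HasGVal Γ y v) ∨ ∃ z ∈ Γ y, HasGVal Γ z m) :
    HasGVal Γ x m := by
  have hlt' : ∀ᶠ N in Filter.atTop, ∀ a ∈ Finset.range m, ∃ y ∈ Γ x, Gfun Γ N y = a := by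
    refine Filter.eventually_all_finset _ |>.mpr fun a ha => ?_
    obtain ⟨y, hy, n, hn⟩ := hlt a (Finset.mem_range.mp ha)
    exact Filter.eventually_atTop.mpr ⟨n, fun N hN => ⟨y, hy, hn N hN⟩⟩
  have hrev' : ∀ᶠ N in Filter.atTop,
      ∀ y ∈ Γ x, Gfun Γ N y ≤ m ∨ ∃ z ∈ Γ y, Gfun Γ N z = m := by
    refine Filter.eventually_all_finset _ |>.mpr fun y hy => ?_
    obtain ⟨v, hvm, n, hn⟩ | ⟨z, hz, n, hn⟩ := hrev y hy
    · exact Filter.eventually_atTop.mpr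
        ⟨n, fun N hN => Or.inl ((hn N hN).trans_le (Nat.cast_le.mpr hvm))⟩
    · exact Filter.eventually_atTop.mpr ⟨n, fun N hN => Or.inr ⟨z, hz, hn N hN⟩⟩
  obtain ⟨N, hltN, hrevN⟩ := (hlt'.and hrev').exists
  refine hasGVal_iff_exists_gfun_eq.mpr
    ⟨N + 1, gfun_succ_eq_coe_iff.mpr ⟨mexF_eq_iff.mpr ⟨?_, ?_⟩, hrevN⟩⟩
  · exact fun y hy hyN => hne y hy (hasGVal_iff_exists_gfun_eq.mpr ⟨N, hyN⟩)
  · exact fun a ha => hltN a (Finset.mem_range.mpr ha)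

end Grundy

section Outcome

variable {W : Type*} {Δ : W → Finset W}

lemma mem_pPos_iff {x : W} : x ∈ PPos Δ ↔ ∃ n, x ∈ PosP Δ n := Set.mem_iUnion

lemma mem_nPos_iff {x : W} : x ∈ NPos Δ ↔ ∃ n, x ∈ PosN Δ n := Set.mem_iUnion

lemma notMem_posN_of_mem_posP {n m : ℕ} {x : W} (hP : x ∈ PosP Δ n) : x ∉ PosN Δ m := by
  induction m generalizing n x with
  | zero => exact Set.notMem_empty x
  | succ m ih =>
    rintro ⟨y, hy, hyP⟩
    cases n with
    | zero => exact Finset.notMem_empty y ((show Δ x = ∅ from hP) ▸ hy)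
    | succ n =>
      obtain ⟨z, hz, hzP⟩ := hP y hy
      cases m with
      | zero => exact Finset.notMem_empty z ((show Δ y = ∅ from hyP) ▸ hz)
      | succ m =>
        -- the two moves `x → y → z` lower both levels by one
        obtain ⟨u, hu, huP⟩ := hyP z hz
        exact ih hzP (show z ∈ PosN Δ (m + 1) from ⟨u, hu, huP⟩)

lemma notMem_nPos_of_mem_pPos {x : W} (hP : x ∈ PPos Δ) : x ∉ NPos Δ := by
  obtain ⟨n, hn⟩ := mem_pPos_iff.mp hP
  simpa [mem_nPos_iff] using fun m => notMem_posN_of_mem_posP (m := m) hn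

lemma mem_nPos_of_mem_pPos {x y : W} (hy : y ∈ Δ x) (hP : y ∈ PPos Δ) : x ∈ NPos Δ := by
  obtain ⟨n, hn⟩ := mem_pPos_iff.mp hP
  exact mem_nPos_iff.mpr ⟨n + 1, y, hy, hn⟩

lemma exists_mem_pPos_of_mem_nPos {x : W} (hN : x ∈ NPos Δ) : ∃ y ∈ Δ x, y ∈ PPos Δ := by
  obtain ⟨_ | n, hn⟩ := mem_nPos_iff.mp hN
  · exact hn.elim
  · obtain ⟨y, hy, hyP⟩ := hn
    exact ⟨y, hy, mem_pPos_iff.mpr ⟨n, hyP⟩⟩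

lemma dPos_eq_empty_iff : DPos Δ = ∅ ↔ ∀ x, x ∈ PPos Δ ∨ x ∈ NPos Δ := by
  rw [DPos, Set.compl_empty_iff, Set.eq_univ_iff_forall]
  rfl

lemma mem_nPos_of_dPos_eq_empty {x : W} (hD : DPos Δ = ∅) (hx : x ∉ PPos Δ) : x ∈ NPos Δ :=
  (dPos_eq_empty_iff.mp hD x).resolve_left hx

end Outcome

section Reduced

variable {V : Type*} {Γ : V → Finset V}

lemma HasGVal.mem_rkSet {x : V} {j : ℕ} (h : HasGVal Γ x j) : x ∈ RkSet Γ j :=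
  fun ⟨_, hm, h'⟩ => hm.ne (h'.unique h)

lemma InfiniteRank.mem_rkSet {x : V} (h : InfiniteRank Γ x) (j : ℕ) : x ∈ RkSet Γ j :=
  fun ⟨m, _, hm⟩ => h.not_hasGVal m hm

lemma rkSet_antitone {i j : ℕ} (h : i ≤ j) : RkSet Γ j ⊆ RkSet Γ i :=
  fun _ hx ⟨m, hm, hval⟩ => hx ⟨m, hm.trans_le h, hval⟩

lemma mem_rkSet_succ_iff {x : V} {j : ℕ} :
    x ∈ RkSet Γ (j + 1) ↔ x ∈ RkSet Γ j ∧ ¬ HasGVal Γ x j := by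
  simp only [RkSet, Set.mem_ofPred_eq, Nat.lt_succ_iff_lt_or_eq, or_and_right, exists_or,
    exists_eq_left, not_or]

lemma mem_rkGraph {j : ℕ} {x y : RkSet Γ j} : y ∈ RkGraph Γ j x ↔ (y : V) ∈ Γ x :=
  Finset.mem_subtype

end Reduced

section GrundyOutcome

variable {V : Type*} {Γ : V → Finset V}

lemma mem_posP_rkGraph_of_gfun_eq {j n : ℕ} {x : V} (h : Gfun Γ n x = j)
    (hx : x ∈ RkSet Γ j) : (⟨x, hx⟩ : RkSet Γ j) ∈ PosP (RkGraph Γ j) n := by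
  induction n generalizing x with
  | zero =>
    have hΓ := (gfun_zero_eq_coe_iff.mp h).1
    exact Finset.eq_empty_iff_forall_notMem.mpr fun y hy => by simp [mem_rkGraph, hΓ] at hy
  | succ n ih =>
    obtain ⟨hmex, hrev⟩ := gfun_succ_eq_coe_iff.mp h
    intro y hy
    rw [mem_rkGraph] at hy
    obtain hle | ⟨z, hz, hzj⟩ := hrev y hy
    · -- an option of value `< j` would not lie in `R^{(j)}`
      obtain ⟨v, hv⟩ := ENat.ne_top_iff_exists.mp (ne_top_of_le_ne_top (ENat.natCast_ne_top j) hle)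
      have hvj : v ≠ j := fun e => (mexF_eq_iff.mp hmex).1 y hy (by rw [← hv, e])
      have hvlt : v < j := lt_of_le_of_ne (by exact_mod_cast hv ▸ hle) hvj
      exact absurd ⟨v, hvlt, hasGVal_iff_exists_gfun_eq.mpr ⟨n, hv.symm⟩⟩ y.2
    · have hzR := (hasGVal_iff_exists_gfun_eq.mpr ⟨n, hzj⟩).mem_rkSet
      exact ⟨⟨z, hzR⟩, mem_rkGraph.mpr hz, ih hzj hzR⟩

lemma HasGVal.mem_pPos_rkGraph {j : ℕ} {x : V} (h : HasGVal Γ x j) (hx : x ∈ RkSet Γ j) :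
    (⟨x, hx⟩ : RkSet Γ j) ∈ PPos (RkGraph Γ j) :=
  let ⟨n, hn⟩ := hasGVal_iff_exists_gfun_eq.mp h
  mem_pPos_iff.mpr ⟨n, mem_posP_rkGraph_of_gfun_eq hn hx⟩

lemma mem_nPos_rkGraph_of_hasGVal {j : ℕ} {x y : V} (hx : x ∈ RkSet Γ j) (hy : y ∈ Γ x)
    (hyj : HasGVal Γ y j) : (⟨x, hx⟩ : RkSet Γ j) ∈ NPos (RkGraph Γ j) :=
  mem_nPos_of_mem_pPos (y := ⟨y, hyj.mem_rkSet⟩) (mem_rkGraph.mpr hy)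
    (hyj.mem_pPos_rkGraph hyj.mem_rkSet)

lemma hasGVal_of_forall_option_reverse {j : ℕ} {x : V}
    (hlow : ∀ i < j, DPos (RkGraph Γ i) = ∅)
    (hPlow : ∀ i < j, ∀ y (hy : y ∈ RkSet Γ i),
      (⟨y, hy⟩ : RkSet Γ i) ∈ PPos (RkGraph Γ i) → HasGVal Γ y i)
    (hx : x ∈ RkSet Γ j) (hopt : ∀ y ∈ Γ x, y ∈ RkSet Γ j → ∃ z ∈ Γ y, HasGVal Γ z j) :
    HasGVal Γ x j := by
  refine hasGVal_of_options_mex_reverse (fun y hy hyj => ?_) (fun a ha => ?_) (fun y hy => ?_)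
  · obtain ⟨z, hz, hzj⟩ := hopt y hy hyj.mem_rkSet
    exact notMem_nPos_of_mem_pPos (hyj.mem_pPos_rkGraph hyj.mem_rkSet)
      (mem_nPos_rkGraph_of_hasGVal hyj.mem_rkSet hz hzj)
  · have hxa : x ∈ RkSet Γ a := rkSet_antitone ha.le hx
    have hN : (⟨x, hxa⟩ : RkSet Γ a) ∈ NPos (RkGraph Γ a) :=
      mem_nPos_of_dPos_eq_empty (hlow a ha) fun hP => hx ⟨a, ha, hPlow a ha x hxa hP⟩
    obtain ⟨y, hy, hyP⟩ := exists_mem_pPos_of_mem_nPos hN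
    exact ⟨y, mem_rkGraph.mp hy, hPlow a ha y y.2 hyP⟩
  · obtain ⟨v, hv⟩ | hinf := hasGVal_or_infiniteRank (Γ := Γ) y
    · obtain hvj | hjv := le_or_gt v j
      · exact Or.inl ⟨v, hvj, hv⟩
      · exact Or.inr (hv.exists_mem_hasGVal_of_lt hjv)
    · exact Or.inr (hopt y hy (hinf.mem_rkSet j))

lemma hasGVal_of_mem_pPos_rkGraph {j : ℕ} (hlow : ∀ i < j, DPos (RkGraph Γ i) = ∅) {x : V}
    (hx : x ∈ RkSet Γ j) (hP : (⟨x, hx⟩ : RkSet Γ j) ∈ PPos (RkGraph Γ j)) : HasGVal Γ x j := by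
  induction j using Nat.strong_induction_on generalizing x with
  | _ j ihj =>
    have hPlow : ∀ i < j, ∀ y (hy : y ∈ RkSet Γ i),
        (⟨y, hy⟩ : RkSet Γ i) ∈ PPos (RkGraph Γ i) → HasGVal Γ y i :=
      fun i hi _ => ihj i hi fun i' hi' => hlow i' (hi'.trans hi)
    obtain ⟨n, hn⟩ := mem_pPos_iff.mp hP
    clear hP
    induction n generalizing x with
    | zero =>
      refine hasGVal_of_forall_option_reverse hlow hPlow hx fun y hy hyR => ?_
      exact absurd ((show RkGraph Γ j ⟨x, hx⟩ = ∅ from hn) ▸ mem_rkGraph.mpr hy)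
        (Finset.notMem_empty ⟨y, hyR⟩)
    | succ n ihn =>
      refine hasGVal_of_forall_option_reverse hlow hPlow hx fun y hy hyR => ?_
      obtain ⟨z, hz, hzP⟩ := hn ⟨y, hyR⟩ (mem_rkGraph.mpr hy)
      exact ⟨z, mem_rkGraph.mp hz, ihn z.2 hzP⟩

theorem mem_pPos_rkGraph_iff {j : ℕ} (hlow : ∀ i < j, DPos (RkGraph Γ i) = ∅) {x : V}
    (hx : x ∈ RkSet Γ j) : (⟨x, hx⟩ : RkSet Γ j) ∈ PPos (RkGraph Γ j) ↔ HasGVal Γ x j :=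
  ⟨hasGVal_of_mem_pPos_rkGraph hlow hx, fun h => h.mem_pPos_rkGraph hx⟩

lemma dPos_rkGraph_eq_empty {j : ℕ} (h : ∀ x, InfiniteRank Γ x → j ∈ ValSet Γ x) :
    DPos (RkGraph Γ j) = ∅ := by
  refine dPos_eq_empty_iff.mpr fun ⟨x, hx⟩ => ?_
  obtain ⟨v, hv⟩ | hinf := hasGVal_or_infiniteRank (Γ := Γ) x
  · obtain rfl | hjv := (not_lt.mp fun hvj => hx ⟨v, hvj, hv⟩).eq_or_lt
    · exact Or.inl (hv.mem_pPos_rkGraph hx)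
    · obtain ⟨y, hy, hyj⟩ := hv.exists_mem_hasGVal_of_lt hjv
      exact Or.inr (mem_nPos_rkGraph_of_hasGVal hx hy hyj)
  · obtain ⟨y, hy, hyj⟩ := h x hinf
    exact Or.inr (mem_nPos_rkGraph_of_hasGVal hx hy hyj)

lemma mem_valSet_of_dPos_rkGraph_eq_empty {j : ℕ} (hD : ∀ i ≤ j, DPos (RkGraph Γ i) = ∅)
    {x : V} (hinf : InfiniteRank Γ x) : j ∈ ValSet Γ x := by
  have hlow : ∀ i < j, DPos (RkGraph Γ i) = ∅ := fun i hi => hD i hi.le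
  have hx := hinf.mem_rkSet j
  have hN : (⟨x, hx⟩ : RkSet Γ j) ∈ NPos (RkGraph Γ j) :=
    mem_nPos_of_dPos_eq_empty (hD j le_rfl)
      fun hP => hinf.not_hasGVal j (hasGVal_of_mem_pPos_rkGraph hlow hx hP)
  obtain ⟨y, hy, hyP⟩ := exists_mem_pPos_of_mem_nPos hN
  exact ⟨y, mem_rkGraph.mp hy, hasGVal_of_mem_pPos_rkGraph hlow y.2 hyP⟩

end GrundyOutcome

theorem stmt11_general {V : Type*} (Γ : V → Finset V) (k : ℕ) :
    ((∀ j ≤ k, DPos (RkGraph Γ j) = ∅) →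
      ∀ x : V, x ∈ RkSet Γ (k + 1) ↔
        ∃ h : x ∈ RkSet Γ k, (⟨x, h⟩ : RkSet Γ k) ∉ PPos (RkGraph Γ k)) ∧
    (kStable Γ k ↔ ∀ j ≤ k, DPos (RkGraph Γ j) = ∅) := by
  refine ⟨fun hD x => ?_, fun hst j hj => dPos_rkGraph_eq_empty fun x hx => hst x hx j hj,
    fun hD x hx j hj => mem_valSet_of_dPos_rkGraph_eq_empty (fun i hi => hD i (hi.trans hj)) hx⟩
  have hlow : ∀ i < k, DPos (RkGraph Γ i) = ∅ := fun i hi => hD i hi.le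
  rw [mem_rkSet_succ_iff]
  exact ⟨fun ⟨hx, hval⟩ => ⟨hx, (mem_pPos_rkGraph_iff hlow hx).not.mpr hval⟩,
    fun ⟨hx, hP⟩ => ⟨hx, (mem_pPos_rkGraph_iff hlow hx).not.mp hP⟩⟩

/-- for `k ≥ 1`: (a) if `V, R(V), …, R^{(k)}(V)` are all
draw-free then `R^{(k+1)}(V) = R(R^{(k)}(V))` (as induced subgraphs of `V`,
i.e. their vertex sets agree); (b) `V` is `k`-stable iff
`V, R(V), …, R^{(k)}(V)` are all draw-free. -/
theorem stmt11 {V : Type*} (Γ : V → Finset V) (k : ℕ) (hk : 1 ≤ k) :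
    ((∀ j ≤ k, DPos (RkGraph Γ j) = ∅) →
      ∀ x : V, x ∈ RkSet Γ (k + 1) ↔
        ∃ h : x ∈ RkSet Γ k, (⟨x, h⟩ : RkSet Γ k) ∉ PPos (RkGraph Γ k)) ∧
    (kStable Γ k ↔ ∀ j ≤ k, DPos (RkGraph Γ j) = ∅) :=
  stmt11_general Γ k
end

section
/- Let V be a locally finite tree and k ∈ ℕ. Suppose V is not k-stable, and in addition, if k ≥ 1, that V is (k−1)-stable. Let x ∈ V be a position of infinite rank with 𝒢(x) = ∞(𝒜) for some 𝒜 with k ∉ 𝒜. Then there exist mex labellings f and f′ of V with f(x) = k and f′(x) ≠ k. -/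
open scoped Classical

universe u

/-!
Call a position *unstable* if it has infinite rank and `k ∉ 𝒜`. By `(k-1)`-stability every
position of infinite rank has options of every finite value `< k`, and then every unstable
position has an unstable option. Hence the positions reachable from `x` through unstable
positions, split by the parity of their depth into `T` and `F`, behave like P- and N-positions:
the unstable options of a position of `T` lie in `F`, and every position of `F` has an option
in `T`. Iterating the mex operator from a labelling that is `k` on `T` and the Sprague-Grundy
value at finite rank preserves the properties "`𝒢` at finite rank, outside `𝒜` at infinite rank,
`k` on `T`, not `k` on `F`", and a compactness limit of the iterates (shifted by depth) is a mex
labelling with the same properties. Putting `x` into `T`, resp. `F`, gives `f`, resp. `f′`.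
-/

open Filter Finset

section Mex

variable {ι : Type*} (s : Finset ι) (g : ι → ℕ∞)

theorem exists_le_card_forall_ne : ∃ n ≤ s.card, ∀ y ∈ s, g y ≠ n := by
  by_contra! h
  have hsub : (range (s.card + 1)).image (Nat.cast : ℕ → ℕ∞) ⊆ s.image g := by
    intro a ha
    obtain ⟨n, hn, rfl⟩ := mem_image.1 ha
    obtain ⟨y, hy, hyn⟩ := h n (by simpa [Nat.lt_succ_iff] using hn)
    exact mem_image.2 ⟨y, hy, hyn⟩
  have := (card_le_card hsub).trans card_image_le
  rw [card_image_of_injective _ Nat.cast_injective, card_range] at this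
  omega

variable {s g} in
theorem mexF_le_of_forall_ne {n : ℕ} (h : ∀ y ∈ s, g y ≠ n) : mexF s g ≤ n := Nat.sInf_le h

theorem mexF_le_card : mexF s g ≤ s.card :=
  let ⟨_, hn, hne⟩ := exists_le_card_forall_ne s g
  (mexF_le_of_forall_ne hne).trans hn

theorem ne_mexF : ∀ y ∈ s, g y ≠ mexF s g :=
  Nat.sInf_mem (let ⟨n, _, hn⟩ := exists_le_card_forall_ne s g; ⟨n, hn⟩)

variable {s g}

theorem exists_eq_of_lt_mexF {j : ℕ} (hj : j < mexF s g) : ∃ y ∈ s, g y = j := by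
  by_contra! h
  exact (mexF_le_of_forall_ne h).not_gt hj

theorem mexF_eq_of_forall {m : ℕ} (hne : ∀ y ∈ s, g y ≠ m)
    (hlt : ∀ j < m, ∃ y ∈ s, g y = j) : mexF s g = m := by
  refine le_antisymm (mexF_le_of_forall_ne hne) (not_lt.1 fun h => ?_)
  obtain ⟨y, hy, hym⟩ := hlt _ h
  exact ne_mexF s g y hy hym

theorem mexF_congr {g' : ι → ℕ∞} (h : ∀ y ∈ s, g y = g' y) : mexF s g = mexF s g' := by
  unfold mexF
  congr 1
  ext n
  exact forall₂_congr fun y hy => by rw [h y hy]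

end Mex

section Gfun

variable {V : Type*} (Γ : V → Finset V)

theorem Gfun_succ (n : ℕ) (v : V) : Gfun Γ (n + 1) v =
    if ∀ y ∈ Γ v, Gfun Γ n y ≤ (mexF (Γ v) (Gfun Γ n) : ℕ∞) ∨
        ∃ z ∈ Γ y, Gfun Γ n z = (mexF (Γ v) (Gfun Γ n) : ℕ∞)
    then (mexF (Γ v) (Gfun Γ n) : ℕ∞) else ⊤ := rfl

variable {Γ}

theorem Gfun_succ_eq_mexF {n : ℕ} {v : V} (h : Gfun Γ (n + 1) v ≠ ⊤) :
    Gfun Γ (n + 1) v = (mexF (Γ v) (Gfun Γ n) : ℕ∞) ∧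
    ∀ y ∈ Γ v, Gfun Γ n y ≤ (mexF (Γ v) (Gfun Γ n) : ℕ∞) ∨
        ∃ z ∈ Γ y, Gfun Γ n z = (mexF (Γ v) (Gfun Γ n) : ℕ∞) := by
  rw [Gfun_succ] at h ⊢
  split_ifs at h ⊢ with hcond
  · exact ⟨rfl, hcond⟩
  · exact absurd rfl h

theorem Gfun_succ_ne_of_mem {n m : ℕ} {y z : V} (hz : z ∈ Γ y) (hzm : Gfun Γ n z = m) :
    Gfun Γ (n + 1) y ≠ m := by
  intro hym
  have hmex : mexF (Γ y) (Gfun Γ n) = m := by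
    exact_mod_cast (Gfun_succ_eq_mexF (hym ▸ ENat.natCast_ne_top m)).1.symm.trans hym
  exact ne_mexF _ _ z hz (by rw [hmex, hzm])

theorem Gfun_succ_eq_of_ne_top {n : ℕ} {v : V} (h : Gfun Γ n v ≠ ⊤) :
    Gfun Γ (n + 1) v = Gfun Γ n v := by
  induction n generalizing v with
  | zero =>
    have hv : Γ v = ∅ := by by_contra hv; simp [Gfun, hv] at h
    simp [Gfun, hv, mexF]
  | succ n ih =>
    obtain ⟨hval, hcond⟩ := Gfun_succ_eq_mexF h
    set m := mexF (Γ v) (Gfun Γ n)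
    have ih' : ∀ {y : V} {a : ℕ}, Gfun Γ n y = a → Gfun Γ (n + 1) y = a := fun hy =>
      (ih (hy ▸ ENat.natCast_ne_top _)).trans hy
    have hne : ∀ y ∈ Γ v, Gfun Γ (n + 1) y ≠ m := by
      intro y hy
      by_cases hfin : Gfun Γ n y = ⊤
      · rcases hcond y hy with hle | ⟨z, hz, hzm⟩
        · simp [hfin] at hle
        · exact Gfun_succ_ne_of_mem hz hzm
      · rw [ih hfin]
        exact ne_mexF _ _ y hy
    have hlt : ∀ j < m, ∃ y ∈ Γ v, Gfun Γ (n + 1) y = j := fun j hj =>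
      let ⟨y, hy, hyj⟩ := exists_eq_of_lt_mexF hj
      ⟨y, hy, ih' hyj⟩
    rw [Gfun_succ, mexF_eq_of_forall hne hlt, hval, if_pos]
    intro y hy
    rcases hcond y hy with hle | ⟨z, hz, hzm⟩
    · obtain ⟨a, ha⟩ := ENat.ne_top_iff_exists.1 (ne_top_of_le_ne_top (ENat.natCast_ne_top m) hle)
      exact Or.inl (by rw [ih' ha.symm, ha]; exact hle)
    · exact Or.inr ⟨z, hz, ih' hzm⟩

theorem Gfun_eq_of_le {n N : ℕ} {v : V} {a : ℕ} (h : Gfun Γ n v = a) (hN : n ≤ N) :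
    Gfun Γ N v = a := by
  induction N, hN using Nat.le_induction with
  | base => exact h
  | succ N _ ih => rw [Gfun_succ_eq_of_ne_top (by simp [ih]), ih]

theorem hasGVal_of_Gfun_eq {n : ℕ} {v : V} {a : ℕ} (h : Gfun Γ n v = a) : HasGVal Γ v a :=
  ⟨n, fun _ hN => Gfun_eq_of_le h hN⟩

theorem HasGVal.unique_s15 {v : V} {a b : ℕ} (ha : HasGVal Γ v a) (hb : HasGVal Γ v b) : a = b := by
  obtain ⟨n, hn⟩ := ha
  obtain ⟨m, hm⟩ := hb
  exact_mod_cast (hn _ (le_max_left n m)).symm.trans (hm _ (le_max_right n m))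

theorem HasGVal.not_infiniteRank {v : V} {a : ℕ} (h : HasGVal Γ v a) : ¬ InfiniteRank Γ v :=
  fun hinf => let ⟨n, hn⟩ := h; ENat.natCast_ne_top a ((hn n le_rfl).symm.trans (hinf n))

theorem infiniteRank_or_hasGVal (v : V) : InfiniteRank Γ v ∨ ∃ a, HasGVal Γ v a := by
  refine or_iff_not_imp_left.2 fun h => ?_
  obtain ⟨n, hn⟩ := not_forall.1 h
  obtain ⟨a, ha⟩ := ENat.ne_top_iff_exists.1 hn
  exact ⟨a, hasGVal_of_Gfun_eq ha.symm⟩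

end Gfun

section Grundy

variable {V : Type*} {Γ : V → Finset V}

variable (Γ) in
/-- Junk value `0` at positions of infinite rank. -/
noncomputable def gval (v : V) : ℕ := sInf {a | HasGVal Γ v a}

theorem hasGVal_gval {v : V} (h : ¬ InfiniteRank Γ v) : HasGVal Γ v (gval Γ v) :=
  Nat.sInf_mem ((infiniteRank_or_hasGVal v).resolve_left h)

theorem HasGVal.gval_eq {v : V} {a : ℕ} (h : HasGVal Γ v a) : gval Γ v = a :=
  (hasGVal_gval h.not_infiniteRank).unique_s15 h

theorem HasGVal.eventually_mexF {v : V} {m : ℕ} (h : HasGVal Γ v m) :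
    ∀ᶠ n in atTop, mexF (Γ v) (Gfun Γ n) = m ∧
      ∀ y ∈ Γ v, Gfun Γ n y ≤ m ∨ ∃ z ∈ Γ y, Gfun Γ n z = m := by
  obtain ⟨n₀, hn₀⟩ := h
  refine eventually_atTop.2 ⟨n₀, fun n hn => ?_⟩
  have hv : Gfun Γ (n + 1) v = m := hn₀ _ (by omega)
  obtain ⟨hval, hcond⟩ := Gfun_succ_eq_mexF (hv ▸ ENat.natCast_ne_top m)
  have hmex : mexF (Γ v) (Gfun Γ n) = m := by exact_mod_cast hval.symm.trans hv
  rw [hmex] at hcond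
  exact ⟨hmex, hcond⟩

theorem eventually_exists_Gfun_eq {v : V} {a : ℕ} (h : a ∈ ValSet Γ v) :
    ∀ᶠ n in atTop, ∃ y ∈ Γ v, Gfun Γ n y = a :=
  let ⟨y, hy, n₀, hn₀⟩ := h
  eventually_atTop.2 ⟨n₀, fun n hn => ⟨y, hy, hn₀ n hn⟩⟩

theorem HasGVal.not_mem_valSet {v : V} {m : ℕ} (h : HasGVal Γ v m) : m ∉ ValSet Γ v := by
  intro hm
  obtain ⟨n, ⟨hmex, -⟩, y, hy, hym⟩ :=
    (h.eventually_mexF.and (eventually_exists_Gfun_eq hm)).exists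
  exact ne_mexF _ _ y hy (by rw [hmex, hym])

theorem HasGVal.mem_valSet_of_lt {v : V} {m j : ℕ} (h : HasGVal Γ v m) (hj : j < m) :
    j ∈ ValSet Γ v := by
  obtain ⟨n, hmex, -⟩ := h.eventually_mexF.exists
  obtain ⟨y, hy, hyj⟩ := exists_eq_of_lt_mexF (by rwa [hmex])
  exact ⟨y, hy, hasGVal_of_Gfun_eq hyj⟩

theorem HasGVal.mem_valSet_of_mem {v y : V} {m : ℕ} (h : HasGVal Γ v m) (hy : y ∈ Γ v)
    (hinf : InfiniteRank Γ y) : m ∈ ValSet Γ y := by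
  obtain ⟨n, -, hcond⟩ := h.eventually_mexF.exists
  rcases hcond y hy with hle | ⟨z, hz, hzm⟩
  · simp [hinf n] at hle
  · exact ⟨z, hz, hasGVal_of_Gfun_eq hzm⟩

variable (Γ) in
def Unstable (k : ℕ) (v : V) : Prop := InfiniteRank Γ v ∧ k ∉ ValSet Γ v

/-- If all of `0, …, k - 1` but not `k` occur among the finite-rank options of `v`, then
`mex = k` at every late stage, so `𝒢ₙ₊₁(v) = ∞` is caused by an option that has value `> k`
and no option of value `k`; such an option is again unstable. -/
theorem Unstable.exists_mem_unstable {k : ℕ} {v : V} (hv : Unstable Γ k v)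
    (hlt : ∀ j < k, j ∈ ValSet Γ v) : ∃ y ∈ Γ v, Unstable Γ k y := by
  have hopt : ∀ᶠ n in atTop, ∀ y ∈ Γ v, (¬ InfiniteRank Γ y → Gfun Γ n y = gval Γ y) ∧
      (k ∈ ValSet Γ y → ∃ z ∈ Γ y, Gfun Γ n z = k) :=
    (eventually_all_finset _).2 fun y _ =>
      (eventually_imp_distrib_left.2 fun hy => eventually_atTop.2 (hasGVal_gval hy)).and
        (eventually_imp_distrib_left.2 eventually_exists_Gfun_eq)
  have hbelow : ∀ᶠ n in atTop, ∀ j ∈ range k, ∃ y ∈ Γ v, Gfun Γ n y = j :=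
    (eventually_all_finset _).2 fun j hj => eventually_exists_Gfun_eq (hlt j (mem_range.1 hj))
  obtain ⟨n, hopt, hbelow⟩ := (hopt.and hbelow).exists
  have hmex : mexF (Γ v) (Gfun Γ n) = k := by
    refine mexF_eq_of_forall (fun y hy hyk => ?_) fun j hj => hbelow j (mem_range.2 hj)
    by_cases hinf : InfiniteRank Γ y
    · simp [hinf n] at hyk
    · rw [(hopt y hy).1 hinf, Nat.cast_inj] at hyk
      exact hv.2 ⟨y, hy, hyk ▸ hasGVal_gval hinf⟩
  have hfail : ¬ ∀ y ∈ Γ v, Gfun Γ n y ≤ (mexF (Γ v) (Gfun Γ n) : ℕ∞) ∨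
      ∃ z ∈ Γ y, Gfun Γ n z = (mexF (Γ v) (Gfun Γ n) : ℕ∞) := fun hcond => by
    simpa [Gfun_succ, if_pos hcond] using hv.1 (n + 1)
  push Not at hfail
  obtain ⟨y, hy, hgt, hno⟩ := hfail
  rw [hmex] at hgt hno
  have hk : k ∉ ValSet Γ y := fun hk =>
    let ⟨z, hz, hzk⟩ := (hopt y hy).2 hk
    hno z hz hzk
  refine ⟨y, hy, by_contra fun hfin => hk ((hasGVal_gval hfin).mem_valSet_of_lt ?_), hk⟩
  rw [(hopt y hy).1 hfin] at hgt
  exact_mod_cast hgt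

end Grundy

section Labelling

variable {V : Type*} (Γ : V → Finset V)

noncomputable def mexUpdate (g : V → ℕ) (v : V) : ℕ := mexF (Γ v) fun y => (g y : ℕ∞)

variable {Γ}

theorem mexLabelling_iff_mexUpdate_eq {f : V → ℕ} : MexLabelling Γ f ↔ mexUpdate Γ f = f := by
  simp [MexLabelling, mexUpdate, mexF, funext_iff, eq_comm]

theorem mexUpdate_congr {g g' : V → ℕ} {v : V} (h : ∀ y ∈ Γ v, g y = g' y) :
    mexUpdate Γ g v = mexUpdate Γ g' v :=
  mexF_congr fun y hy => by rw [h y hy]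

theorem ne_mexUpdate (g : V → ℕ) (v : V) : ∀ y ∈ Γ v, g y ≠ mexUpdate Γ g v :=
  fun y hy h => ne_mexF (Γ v) (fun y => (g y : ℕ∞)) y hy (congrArg Nat.cast h)

theorem mexUpdate_le_card (g : V → ℕ) (v : V) : mexUpdate Γ g v ≤ (Γ v).card :=
  mexF_le_card _ _

variable (Γ) in
/-- `T` and `F` play the roles of the P- and N-positions of the game "reach value `k`". -/
structure IsPinning (k : ℕ) (T F : Set V) : Prop where
  unstable_of_mem : ∀ v ∈ T ∪ F, Unstable Γ k v
  disjoint : Disjoint T F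
  mem_right_of_mem_left : ∀ v ∈ T, ∀ y ∈ Γ v, Unstable Γ k y → y ∈ F
  exists_mem_left_of_mem_right : ∀ v ∈ F, ∃ y ∈ Γ v, y ∈ T

variable (Γ) in
structure Compatible (k : ℕ) (T F : Set V) (g : V → ℕ) : Prop where
  eq_gval : ∀ v, ¬ InfiniteRank Γ v → g v = gval Γ v
  not_mem_valSet : ∀ v, InfiniteRank Γ v → g v ∉ ValSet Γ v
  eq_of_mem_left : ∀ v ∈ T, g v = k
  ne_of_mem_right : ∀ v ∈ F, g v ≠ k

variable {k : ℕ} {T F : Set V}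

theorem mexUpdate_eq_gval {g : V → ℕ} {v : V} (hg : Compatible Γ k T F g)
    (hv : ¬ InfiniteRank Γ v) : mexUpdate Γ g v = gval Γ v := by
  have hval := hasGVal_gval hv
  refine mexF_eq_of_forall (fun y hy hyv => ?_) fun j hj => ?_
  · rw [Nat.cast_inj] at hyv
    by_cases hinf : InfiniteRank Γ y
    · exact hg.not_mem_valSet y hinf (hyv ▸ hval.mem_valSet_of_mem hy hinf)
    · rw [hg.eq_gval y hinf] at hyv
      exact hval.not_mem_valSet ⟨y, hy, hyv ▸ hasGVal_gval hinf⟩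
  · obtain ⟨y, hy, hyj⟩ := hval.mem_valSet_of_lt hj
    exact ⟨y, hy, by rw [hg.eq_gval y hyj.not_infiniteRank, hyj.gval_eq]⟩

theorem mexUpdate_not_mem_valSet {g : V → ℕ} (hg : Compatible Γ k T F g) (v : V) :
    mexUpdate Γ g v ∉ ValSet Γ v := fun ⟨y, hy, hya⟩ =>
  ne_mexUpdate g v y hy (by rw [hg.eq_gval y hya.not_infiniteRank, hya.gval_eq])

theorem mexUpdate_eq_of_mem_left (hP : IsPinning Γ k T F)
    (hstab : ∀ v, InfiniteRank Γ v → ∀ j < k, j ∈ ValSet Γ v) {g : V → ℕ}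
    (hg : Compatible Γ k T F g) {v : V} (hv : v ∈ T) : mexUpdate Γ g v = k := by
  obtain ⟨hinf, hk⟩ := hP.unstable_of_mem v (Or.inl hv)
  refine mexF_eq_of_forall (fun y hy hyk => ?_) fun j hj => ?_
  · rw [Nat.cast_inj] at hyk
    by_cases hyinf : InfiniteRank Γ y
    · by_cases hky : k ∈ ValSet Γ y
      · exact hg.not_mem_valSet y hyinf (hyk ▸ hky)
      · exact hg.ne_of_mem_right y (hP.mem_right_of_mem_left v hv y hy ⟨hyinf, hky⟩) hyk
    · rw [hg.eq_gval y hyinf] at hyk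
      exact hk ⟨y, hy, hyk ▸ hasGVal_gval hyinf⟩
  · obtain ⟨y, hy, hyj⟩ := hstab v hinf j hj
    exact ⟨y, hy, by rw [hg.eq_gval y hyj.not_infiniteRank, hyj.gval_eq]⟩

theorem mexUpdate_ne_of_mem_right (hP : IsPinning Γ k T F) {g : V → ℕ}
    (hg : Compatible Γ k T F g) {v : V} (hv : v ∈ F) : mexUpdate Γ g v ≠ k := fun hvk =>
  let ⟨y, hy, hyT⟩ := hP.exists_mem_left_of_mem_right v hv
  ne_mexUpdate g v y hy (by rw [hg.eq_of_mem_left y hyT, hvk])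

theorem Compatible.mexUpdate (hP : IsPinning Γ k T F)
    (hstab : ∀ v, InfiniteRank Γ v → ∀ j < k, j ∈ ValSet Γ v) {g : V → ℕ}
    (hg : Compatible Γ k T F g) : Compatible Γ k T F (mexUpdate Γ g) where
  eq_gval _ := mexUpdate_eq_gval hg
  not_mem_valSet v _ := mexUpdate_not_mem_valSet hg v
  eq_of_mem_left _ := mexUpdate_eq_of_mem_left hP hstab hg
  ne_of_mem_right _ := mexUpdate_ne_of_mem_right hP hg

variable (Γ k T) in
noncomputable def pinnedSeed (v : V) : ℕ :=
  if v ∈ T then k else if InfiniteRank Γ v then k + 1 + (Γ v).sup (gval Γ) else gval Γ v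

theorem compatible_pinnedSeed (hP : IsPinning Γ k T F) :
    Compatible Γ k T F (pinnedSeed Γ k T) where
  eq_gval v hv := by
    have hvT : v ∉ T := fun hvT => hv (hP.unstable_of_mem v (Or.inl hvT)).1
    simp [pinnedSeed, hvT, hv]
  not_mem_valSet v hv := by
    by_cases hvT : v ∈ T
    · simpa [pinnedSeed, hvT] using (hP.unstable_of_mem v (Or.inl hvT)).2
    · rintro ⟨y, hy, hya⟩
      have hle : gval Γ y ≤ (Γ v).sup (gval Γ) := le_sup hy
      simp only [pinnedSeed, hvT, hv, if_false, if_true] at hya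
      rw [hya.gval_eq] at hle
      omega
  eq_of_mem_left v hv := by simp [pinnedSeed, hv]
  ne_of_mem_right v hv := by
    have hvT : v ∉ T := hP.disjoint.notMem_of_mem_right hv
    simp only [pinnedSeed, hvT, (hP.unstable_of_mem v (Or.inr hv)).1, if_false, if_true]
    omega

end Labelling

theorem Ultrafilter.exists_eventually_eq_of_finite_range {α β : Type*} (U : Ultrafilter α)
    {h : α → β} (hh : (Set.range h).Finite) : ∃ b, ∀ᶠ a in (U : Filter α), h a = b := by
  obtain ⟨b, -, hb⟩ := Ultrafilter.eq_pure_of_finite_mem hh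
    (f := U.map h) (Filter.range_mem_map (f := (U : Filter α)))
  have hmem : ({b} : Set β) ∈ U.map h := by rw [hb]; exact Ultrafilter.mem_pure.2 rfl
  exact ⟨b, hmem⟩

section Limit

variable {V : Type*} {Γ : V → Finset V}

theorem iterate_mexUpdate_mem (s : V → ℕ) (j : ℕ) (v : V) :
    (mexUpdate Γ)^[j] s v ∈ insert (s v) (Set.Iic (Γ v).card) := by
  cases j with
  | zero => exact Set.mem_insert _ _
  | succ j =>
    rw [Function.iterate_succ_apply']
    exact Set.mem_insert_of_mem _ (mexUpdate_le_card _ _)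

/-- Compactness: on a graded graph, `n ↦ mexUpdate^[n - d v] s v` satisfies the mex equation
at every `v` with `d v < n`, so a limit along a free ultrafilter is a mex labelling. -/
theorem exists_mexLabelling_iterate {d : V → ℕ} (hd : ∀ v, ∀ y ∈ Γ v, d y = d v + 1)
    (s : V → ℕ) : ∃ f, MexLabelling Γ f ∧ ∀ v, ∃ j, f v = (mexUpdate Γ)^[j] s v := by
  let g : ℕ → V → ℕ := fun n v => (mexUpdate Γ)^[n - d v] s v
  have hg : ∀ n v, d v < n → g n v = mexUpdate Γ (g n) v := by
    intro n v hn
    obtain ⟨j, hj⟩ : ∃ j, n - d v = j + 1 := ⟨n - d v - 1, by omega⟩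
    simp only [g, hj, Function.iterate_succ_apply']
    exact mexUpdate_congr fun y hy => by rw [hd v y hy, show n - (d v + 1) = j by omega]
  have hlim : ∀ v, ∃ a, ∀ᶠ n in (hyperfilter ℕ : Filter ℕ), g n v = a := fun v =>
    (hyperfilter ℕ).exists_eventually_eq_of_finite_range <|
      ((Set.finite_Iic _).insert (s v)).subset <| Set.range_subset_iff.2 fun n =>
        iterate_mexUpdate_mem s _ v
  choose f hf using hlim
  refine ⟨f, mexLabelling_iff_mexUpdate_eq.2 (funext fun v => ?_), fun v => ?_⟩
  · have hlate : ∀ᶠ n in (hyperfilter ℕ : Filter ℕ), d v < n :=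
      (eventually_gt_atTop _).filter_mono Nat.hyperfilter_le_atTop
    obtain ⟨n, hv, hopt, hn⟩ :=
      ((hf v).and (((eventually_all_finset _).2 fun y _ => hf y).and hlate)).exists
    rw [← hv, hg n v hn]
    exact mexUpdate_congr fun y hy => (hopt y hy).symm
  · obtain ⟨n, hn⟩ := (hf v).exists
    exact ⟨n - d v, hn.symm⟩

variable {k : ℕ} {T F : Set V}

theorem exists_mexLabelling_of_isPinning {d : V → ℕ} (hd : ∀ v, ∀ y ∈ Γ v, d y = d v + 1)
    (hstab : ∀ v, InfiniteRank Γ v → ∀ j < k, j ∈ ValSet Γ v) (hP : IsPinning Γ k T F) :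
    ∃ f, MexLabelling Γ f ∧ (∀ v ∈ T, f v = k) ∧ ∀ v ∈ F, f v ≠ k := by
  obtain ⟨f, hf, hiter⟩ := exists_mexLabelling_iterate hd (pinnedSeed Γ k T)
  have hcomp : ∀ j, Compatible Γ k T F ((mexUpdate Γ)^[j] (pinnedSeed Γ k T)) := by
    intro j
    induction j with
    | zero => exact compatible_pinnedSeed hP
    | succ j ih =>
      rw [Function.iterate_succ_apply']
      exact ih.mexUpdate hP hstab
  refine ⟨f, hf, fun v hv => ?_, fun v hv => ?_⟩ <;> obtain ⟨j, hj⟩ := hiter v <;> rw [hj]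
  exacts [(hcomp j).eq_of_mem_left v hv, (hcomp j).ne_of_mem_right v hv]

end Limit

section Tree

variable {V : Type*} {Γ : V → Finset V}

theorem IsTree.exists_depth {o : V} (ht : IsTree Γ o) :
    ∃ d : V → ℕ, ∀ v, ∀ y ∈ Γ v, d y = d v + 1 := by
  choose w hw huniq using ht.2
  refine ⟨fun v => (w v).length, fun v y hy => ?_⟩
  obtain ⟨hhead, hlast, hchain⟩ := hw v
  have hne : w v ≠ [] := by rintro h; simp [h] at hhead
  have hwalk : IsWalk Γ o y (w v ++ [y]) := by
    refine ⟨by rwa [List.head?_append_of_ne_nil _ hne], by simp, ?_⟩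
    refine hchain.append (List.isChain_singleton y) fun a ha b hb => ?_
    rw [hlast, Option.mem_some_iff] at ha
    simp only [List.head?_cons, Option.mem_some_iff] at hb
    exact ha ▸ hb ▸ hy
  simp [← huniq y _ hwalk]

variable (Γ) in
def unstableReach (k : ℕ) (x : V) : Set V :=
  {v | Relation.ReflTransGen (fun a b => b ∈ Γ a ∧ Unstable Γ k b) x v}

variable {k : ℕ} {x : V}

theorem Unstable.of_mem_unstableReach (hx : Unstable Γ k x) {v : V}
    (hv : v ∈ unstableReach Γ k x) : Unstable Γ k v := by
  rcases hv.cases_tail with rfl | ⟨_, -, -, hv⟩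
  exacts [hx, hv]

theorem isPinning_unstableReach {d : V → ℕ} (hd : ∀ v, ∀ y ∈ Γ v, d y = d v + 1)
    (hstab : ∀ v, InfiniteRank Γ v → ∀ j < k, j ∈ ValSet Γ v) (hx : Unstable Γ k x)
    (p : Bool) :
    IsPinning Γ k {v | v ∈ unstableReach Γ k x ∧ (d v).bodd = p}
      {v | v ∈ unstableReach Γ k x ∧ (d v).bodd = !p} where
  unstable_of_mem v hv := hx.of_mem_unstableReach (hv.elim And.left And.left)
  disjoint := Set.disjoint_left.2 fun v hT hF => by simp [hT.2] at hF
  mem_right_of_mem_left v hv y hy hyu := ⟨hv.1.tail ⟨hy, hyu⟩, by simp [hd v y hy, hv.2]⟩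
  exists_mem_left_of_mem_right v hv := by
    have hvu := hx.of_mem_unstableReach hv.1
    obtain ⟨y, hy, hyu⟩ := hvu.exists_mem_unstable (hstab v hvu.1)
    exact ⟨y, hy, hv.1.tail ⟨hy, hyu⟩, by simp [hd v y hy, hv.2]⟩

end Tree

theorem stmt15_general {V : Type*} (Γ : V → Finset V) (o : V) (ht : IsTree Γ o) (k : ℕ)
    (hs : 1 ≤ k → kStable Γ (k - 1))
    (x : V) (A : Set ℕ) (hinf : InfiniteRank Γ x) (hA : ValSet Γ x = A)
    (hk : k ∉ A) :
    ∃ f f' : V → ℕ, MexLabelling Γ f ∧ MexLabelling Γ f' ∧ f x = k ∧ f' x ≠ k := by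
  obtain ⟨d, hd⟩ := ht.exists_depth
  have hstab : ∀ v, InfiniteRank Γ v → ∀ j < k, j ∈ ValSet Γ v :=
    fun v hv j hj => hs (by omega) v hv j (by omega)
  have hx : Unstable Γ k x := ⟨hinf, hA ▸ hk⟩
  obtain ⟨f, hf, hfx, -⟩ :=
    exists_mexLabelling_of_isPinning hd hstab (isPinning_unstableReach hd hstab hx (d x).bodd)
  obtain ⟨f', hf', -, hf'x⟩ :=
    exists_mexLabelling_of_isPinning hd hstab (isPinning_unstableReach hd hstab hx !(d x).bodd)
  exact ⟨f, f', hf, hf', hfx x ⟨.refl, rfl⟩, hf'x x ⟨.refl, (Bool.not_not _).symm⟩⟩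

/-- if the locally finite tree `V` is not `k`-stable (but is
`(k−1)`-stable when `k ≥ 1`), and `x` has infinite rank with `𝒢(x) = ∞(𝒜)`
for some `𝒜` with `k ∉ 𝒜`, then there are mex labellings `f, f′` of `V` with
`f x = k` and `f′ x ≠ k`. -/
theorem stmt15 {V : Type*} (Γ : V → Finset V) (o : V) (ht : IsTree Γ o) (k : ℕ)
    (hns : ¬ kStable Γ k) (hs : 1 ≤ k → kStable Γ (k - 1))
    (x : V) (A : Set ℕ) (hinf : InfiniteRank Γ x) (hA : ValSet Γ x = A)
    (hk : k ∉ A) :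
    ∃ f f' : V → ℕ, MexLabelling Γ f ∧ MexLabelling Γ f' ∧ f x = k ∧ f' x ≠ k :=
  stmt15_general Γ o ht k hs x A hinf hA hk
end
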